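/- Let M be a partial group and f, g ∈ M. If η(f) = η(g) in the enveloping presented group G₀(M), then there exists a nonempty word w ∈ List M with w ⇝* [f] and w ⇝* [g]. -/

import Mathlib

/-- A partial group in Chermak's sense: a nonempty set `M` with a domain `D` of words
containing all words of length at most `1`, a product `Π` (here `pi`, given as a total
function whose axioms only concern words in `D`), and an involution `inv`. -/
structure PartialGroup (M : Type u) where
  /-- The underlying set is nonempty. -/
  nonempty : Nonempty M
  /-- The set of words on which the product is defined. -/
  D : Set (List M)
  /-- The product `Π : D → M` (extended arbitrarily to all words). -/
  pi : List M → M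
  /-- The inversion `x ↦ x⁻¹`. -/
  inv : M → M
  /-- `D` contains all words of length at most `1`. -/
  mem_D_of_length_le_one : ∀ w : List M, w.length ≤ 1 → w ∈ D
  /-- (i) `Π [f] = f`. -/
  pi_single : ∀ f : M, pi [f] = f
  /-- (ii) if `u ++ v ∈ D` then `u ∈ D`. -/
  mem_D_of_append_left : ∀ u v : List M, u ++ v ∈ D → u ∈ D
  /-- (ii) if `u ++ v ∈ D` then `v ∈ D`. -/
  mem_D_of_append_right : ∀ u v : List M, u ++ v ∈ D → v ∈ D
  /-- (iii) if `u ++ v ++ w ∈ D` then `u ++ [Π v] ++ w ∈ D`. -/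
  mem_D_contract : ∀ u v w : List M, u ++ v ++ w ∈ D → u ++ [pi v] ++ w ∈ D
  /-- (iii) if `u ++ v ++ w ∈ D` then `Π (u ++ v ++ w) = Π (u ++ [Π v] ++ w)`. -/
  pi_contract : ∀ u v w : List M, u ++ v ++ w ∈ D → pi (u ++ v ++ w) = pi (u ++ [pi v] ++ w)
  /-- `inv` is an involution. -/
  inv_inv : ∀ x : M, inv (inv x) = x
  /-- (iv) if `w ∈ D` then `w⁻¹ ++ w ∈ D`, where `w⁻¹` is the entrywise-inverted
  reverse of `w`. -/
  mem_D_inv_append : ∀ w ∈ D, (w.reverse.map inv) ++ w ∈ D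
  /-- (iv) if `w ∈ D` then `Π (w⁻¹ ++ w) = 1 = Π []`. -/
  pi_inv_append : ∀ w ∈ D, pi ((w.reverse.map inv) ++ w) = pi []

/-- The formal inverse of a word: reverse it and invert each entry. -/
def PartialGroup.wInv {M : Type u} (P : PartialGroup M) (w : List M) : List M :=
  w.reverse.map P.inv

/-- The single-contraction relation `⇝` on words in a partial group:
`u ++ [a, b] ++ v ⇝ u ++ [Π [a, b]] ++ v` whenever `[a, b] ∈ D`. -/
def PartialGroup.Contract {M : Type u} (P : PartialGroup M) (x y : List M) : Prop :=
  ∃ (u v : List M) (a b : M), [a, b] ∈ P.D ∧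
    x = u ++ [a, b] ++ v ∧ y = u ++ [P.pi [a, b]] ++ v

/-- The reflexive–transitive closure `⇝*` of the single-contraction relation. -/
def PartialGroup.ContractStar {M : Type u} (P : PartialGroup M) : List M → List M → Prop :=
  Relation.ReflTransGen P.Contract

/-- The relators `a · b · (Π [a, b])⁻¹` for `[a, b] ∈ D` in the free group on `M`,
presenting the enveloping group `G₀(M)`. -/
def PartialGroup.relators {M : Type u} (P : PartialGroup M) : Set (FreeGroup M) :=
  { r | ∃ a b : M, [a, b] ∈ P.D ∧
      r = FreeGroup.of a * FreeGroup.of b * (FreeGroup.of (P.pi [a, b]))⁻¹ }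

/-- The enveloping presented group `G₀(M)` of a partial group. -/
def PartialGroup.envGroup {M : Type u} (P : PartialGroup M) : Type u :=
  PresentedGroup P.relators

instance {M : Type u} (P : PartialGroup M) : Group P.envGroup :=
  inferInstanceAs (Group (PresentedGroup P.relators))

/-- The canonical map `η : M → G₀(M)`. -/
def PartialGroup.eta {M : Type u} (P : PartialGroup M) : M → P.envGroup :=
  PresentedGroup.of

/-!
Two nonempty words are related when they have a common expansion, a word contracting to both
(a "mountain"). This is an equivalence relation: given mountains `w₁` over `x, y` and `w₂` over
`y, z`, the word `w₁ ++ y⁻¹ ++ w₂` is a mountain over `x, z`, since `y ++ y⁻¹` and `y⁻¹ ++ y`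
contract to the unit, which is then absorbed by a neighbour. Prepending a letter `m` permutes the
classes, and the relator `a · b · (Π [a, b])⁻¹` acts trivially, so `G₀(M)` acts on the classes with
`η m` acting by prepending `m`. If `η f = η g`, then `[f, 1]` and `[g, 1]` lie in the same class.
-/

namespace PartialGroup

variable {M : Type u} (P : PartialGroup M)

lemma mem_D_singleton (x : M) : [x] ∈ P.D :=
  P.mem_D_of_length_le_one [x] (by simp)

lemma mem_D_one_cons (x : M) : [P.pi [], x] ∈ P.D := by
  simpa using P.mem_D_contract [] [] [x] (by simpa using P.mem_D_singleton x)

lemma pi_one_cons (x : M) : P.pi [P.pi [], x] = x := by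
  simpa [P.pi_single] using (P.pi_contract [] [] [x] (by simpa using P.mem_D_singleton x)).symm

lemma mem_D_pair_one (x : M) : [x, P.pi []] ∈ P.D := by
  simpa using P.mem_D_contract [x] [] [] (by simpa using P.mem_D_singleton x)

lemma pi_pair_one (x : M) : P.pi [x, P.pi []] = x := by
  simpa [P.pi_single] using (P.pi_contract [x] [] [] (by simpa using P.mem_D_singleton x)).symm

lemma mem_D_inv_pair (x : M) : [P.inv x, x] ∈ P.D := by
  simpa using P.mem_D_inv_append [x] (P.mem_D_singleton x)

lemma pi_inv_pair (x : M) : P.pi [P.inv x, x] = P.pi [] := by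
  simpa using P.pi_inv_append [x] (P.mem_D_singleton x)

lemma mem_D_pair_inv (x : M) : [x, P.inv x] ∈ P.D := by
  simpa [P.inv_inv] using P.mem_D_inv_pair (P.inv x)

lemma pi_pair_inv (x : M) : P.pi [x, P.inv x] = P.pi [] := by
  simpa [P.inv_inv] using P.pi_inv_pair (P.inv x)

lemma wInv_cons (a : M) (t : List M) : P.wInv (a :: t) = P.wInv t ++ [P.inv a] := by
  simp [wInv]

lemma wInv_wInv (w : List M) : P.wInv (P.wInv w) = w := by
  simp [wInv, Function.comp_def, P.inv_inv]

section Contraction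

variable {P}

lemma contract_of_pi_eq {a b c : M} (hD : [a, b] ∈ P.D) (hc : P.pi [a, b] = c) (u v : List M) :
    P.Contract (u ++ [a, b] ++ v) (u ++ [c] ++ v) :=
  ⟨u, v, a, b, hD, rfl, hc ▸ rfl⟩

lemma Contract.ne_nil_left {x y : List M} (h : P.Contract x y) : x ≠ [] := by
  obtain ⟨u, v, a, b, -, rfl, -⟩ := h
  simp

lemma Contract.ne_nil_right {x y : List M} (h : P.Contract x y) : y ≠ [] := by
  obtain ⟨u, v, a, b, -, -, rfl⟩ := h
  simp

lemma Contract.append_append {x y : List M} (h : P.Contract x y) (u v : List M) :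
    P.Contract (u ++ x ++ v) (u ++ y ++ v) := by
  obtain ⟨u', v', a, b, hD, rfl, rfl⟩ := h
  exact ⟨u ++ u', v' ++ v, a, b, hD, by simp, by simp⟩

lemma ContractStar.refl {x : List M} : P.ContractStar x x :=
  Relation.ReflTransGen.refl

lemma ContractStar.trans {x y z : List M} (hxy : P.ContractStar x y) (hyz : P.ContractStar y z) :
    P.ContractStar x z :=
  Relation.ReflTransGen.trans hxy hyz

lemma ContractStar.append {x x' y y' : List M} (hx : P.ContractStar x x')
    (hy : P.ContractStar y y') : P.ContractStar (x ++ y) (x' ++ y') := by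
  have hx' : P.ContractStar (x ++ y) (x' ++ y) :=
    hx.lift (· ++ y) fun _ _ h => by simpa using h.append_append [] y
  have hy' : P.ContractStar (x' ++ y) (x' ++ y') :=
    hy.lift (x' ++ ·) fun _ _ h => by simpa using h.append_append x' []
  exact hx'.trans hy'

lemma ContractStar.eq_nil_iff {x y : List M} (h : P.ContractStar x y) : x = [] ↔ y = [] := by
  induction h with
  | refl => rfl
  | tail _ hyz ih => simp [ih, hyz.ne_nil_left, hyz.ne_nil_right]

lemma contract_one {u v : List M} (h : u ++ v ≠ []) :
    P.Contract (u ++ [P.pi []] ++ v) (u ++ v) := by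
  rcases List.eq_nil_or_concat u with rfl | ⟨s, x, rfl⟩
  · obtain ⟨y, t, rfl⟩ := List.exists_cons_of_ne_nil (by simpa using h)
    simpa using contract_of_pi_eq (P.mem_D_one_cons y) (P.pi_one_cons y) [] t
  · simpa using contract_of_pi_eq (P.mem_D_pair_one x) (P.pi_pair_one x) s v

lemma contractStar_cons_cons {a b : M} {x : List M} (hD : [a, b] ∈ P.D)
    (hab : P.pi [a, b] = P.pi []) (hx : x ≠ []) : P.ContractStar (a :: b :: x) x := by
  have hpair := contract_of_pi_eq hD hab [] x
  have hone := contract_one (P := P) (u := []) (v := x) (by simpa using hx)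
  exact .head (by simpa using hpair) (.single (by simpa using hone))

lemma contractStar_wInv_cancel (y : List M) {u v : List M} (h : u ++ v ≠ []) :
    P.ContractStar (u ++ y ++ P.wInv y ++ v) (u ++ v) := by
  induction y generalizing u v with
  | nil => simpa [wInv] using ContractStar.refl (P := P) (x := u ++ v)
  | cons a t ih =>
    have hinner := ih (u := u ++ [a]) (v := P.inv a :: v) (by simp)
    have hpair := contract_of_pi_eq (P.mem_D_pair_inv a) (P.pi_pair_inv a) u v
    have hpeak :
        P.ContractStar (u ++ (a :: t) ++ P.wInv (a :: t) ++ v) (u ++ [a, P.inv a] ++ v) := by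
      simpa [wInv_cons] using hinner
    exact .tail (.tail hpeak hpair) (contract_one h)

end Contraction

def Mountain (x y : List M) : Prop :=
  ∃ w, P.ContractStar w x ∧ P.ContractStar w y

namespace Mountain

variable {P}

lemma of_contractStar {x y : List M} (h : P.ContractStar x y) : P.Mountain x y :=
  ⟨x, .refl, h⟩

lemma symm {x y : List M} : P.Mountain x y → P.Mountain y x
  | ⟨w, hx, hy⟩ => ⟨w, hy, hx⟩

lemma cons (m : M) {x y : List M} : P.Mountain x y → P.Mountain (m :: x) (m :: y)
  | ⟨w, hx, hy⟩ =>
    ⟨m :: w, ContractStar.append (x := [m]) .refl hx, ContractStar.append (x := [m]) .refl hy⟩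

lemma trans {x y z : List M} (hy : y ≠ []) : P.Mountain x y → P.Mountain y z → P.Mountain x z
  | ⟨w₁, hw₁x, hw₁y⟩, ⟨w₂, hw₂y, hw₂z⟩ => by
    have hx : x ≠ [] := by rwa [Ne, ← hw₁x.eq_nil_iff, hw₁y.eq_nil_iff]
    have hz : z ≠ [] := by rwa [Ne, ← hw₂z.eq_nil_iff, hw₂y.eq_nil_iff]
    refine ⟨w₁ ++ P.wInv y ++ w₂, ?_, ?_⟩
    · have hcancel :=
        contractStar_wInv_cancel (P := P) (P.wInv y) (u := x) (v := []) (by simpa using hx)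
      rw [wInv_wInv, List.append_nil, List.append_nil] at hcancel
      simpa using ((hw₁x.append .refl).append hw₂y).trans hcancel
    · have hcancel := contractStar_wInv_cancel (P := P) y (u := []) (v := z) (by simpa using hz)
      simpa using ((hw₁y.append .refl).append hw₂z).trans hcancel

end Mountain

def mountainSetoid : Setoid {w : List M // w ≠ []} where
  r x y := P.Mountain x y
  iseqv := ⟨fun _ => .of_contractStar .refl, .symm, fun {_ y _} => .trans y.2⟩

abbrev mountainClass (w : List M) (hw : w ≠ []) : Quotient P.mountainSetoid :=
  Quotient.mk P.mountainSetoid ⟨w, hw⟩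

lemma mountainClass_eq_of_contractStar {x y : List M} (hx : x ≠ []) (hy : y ≠ [])
    (h : P.ContractStar x y) : P.mountainClass x hx = P.mountainClass y hy :=
  Quotient.sound (Mountain.of_contractStar h)

def consClass (m : M) : Quotient P.mountainSetoid → Quotient P.mountainSetoid :=
  Quotient.map (fun x => ⟨m :: x.1, List.cons_ne_nil _ _⟩) fun _ _ => Mountain.cons m

lemma consClass_consClass_of_pi_eq_one {a b : M} (hD : [a, b] ∈ P.D)
    (hab : P.pi [a, b] = P.pi []) (q : Quotient P.mountainSetoid) :
    P.consClass a (P.consClass b q) = q := by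
  induction q using Quotient.ind with
  | _ x => exact P.mountainClass_eq_of_contractStar _ x.2 (contractStar_cons_cons hD hab x.2)

def consPerm (m : M) : Equiv.Perm (Quotient P.mountainSetoid) where
  toFun := P.consClass m
  invFun := P.consClass (P.inv m)
  left_inv := P.consClass_consClass_of_pi_eq_one (P.mem_D_inv_pair m) (P.pi_inv_pair m)
  right_inv := P.consClass_consClass_of_pi_eq_one (P.mem_D_pair_inv m) (P.pi_pair_inv m)

lemma lift_consPerm_of_mem_relators {r : FreeGroup M} (hr : r ∈ P.relators) :
    FreeGroup.lift P.consPerm r = 1 := by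
  obtain ⟨a, b, hD, rfl⟩ := hr
  ext q : 1
  induction q using Quotient.ind with
  | _ x =>
    have hab := contract_of_pi_eq hD rfl [] (P.inv (P.pi [a, b]) :: x.1)
    have hcancel := contractStar_cons_cons (P.mem_D_pair_inv (P.pi [a, b])) (P.pi_pair_inv _) x.2
    exact P.mountainClass_eq_of_contractStar _ x.2 (.head (by simpa using hab) hcancel)

def envGroupAction : P.envGroup →* Equiv.Perm (Quotient P.mountainSetoid) :=
  PresentedGroup.toGroup fun _ => P.lift_consPerm_of_mem_relators

lemma envGroupAction_eta (m : M) : P.envGroupAction (P.eta m) = P.consPerm m :=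
  PresentedGroup.toGroup.of _

end PartialGroup

/-- If `η f = η g` in the enveloping presented group `G₀(M)`, then there is a nonempty
word `w` with `w ⇝* [f]` and `w ⇝* [g]`. -/
theorem exists_mountain_of_eta_eq {M : Type u} (P : PartialGroup M) (f g : M)
    (h : P.eta f = P.eta g) :
    ∃ w : List M, w ≠ [] ∧ P.ContractStar w [f] ∧ P.ContractStar w [g] := by
  have hact := congr($(congrArg P.envGroupAction h) (P.mountainClass [P.pi []] (by simp)))
  rw [P.envGroupAction_eta, P.envGroupAction_eta] at hact
  obtain ⟨w, hwf, hwg⟩ : P.Mountain [f, P.pi []] [g, P.pi []] := Quotient.exact hact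
  have hdrop (x : M) : P.ContractStar [x, P.pi []] [x] :=
    .single (by simpa using PartialGroup.contract_one (P := P) (u := [x]) (v := []) (by simp))
  exact ⟨w, by simp [hwf.eq_nil_iff], hwf.trans (hdrop f), hwg.trans (hdrop g)⟩
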